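/- Let 0 < R ≤ ∞ and let ψ be a quasiconcave function on [0,R). Then there exists a constant C > 0 such that C⁻¹ · (T_ψ f(t) + f**(t)) ≤ T_ψ(f**)(t) ≤ C · (T_ψ f(t) + f**(t)) for every nonnegative nonincreasing measurable function f on (0,R) and every t ∈ (0,R) if and only if ψ satisfies the B-condition. (The lower bound T_ψ f(t) + f**(t) ≤ 2·T_ψ(f**)(t) holds for every quasiconcave ψ, since f ≤ f** for nonincreasing f and g ≤ T_ψ g for continuous nonincreasing g; the content is the upper bound.) -/

import Mathlib

open MeasureTheory Set ENNReal Filter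

noncomputable section

/-- The open interval `(0, R)` inside `ℝ`, where `R ∈ (0, ∞]` is an extended real. -/
def DomIoo (R : ℝ≥0∞) : Set ℝ := {t : ℝ | 0 < t ∧ ENNReal.ofReal t < R}

/-- The part of `(0, R)` lying strictly above `t`. -/
def DomAbove (R : ℝ≥0∞) (t : ℝ) : Set ℝ := {s : ℝ | t < s ∧ ENNReal.ofReal s < R}

/-- `φ : [0, R) → [0, ∞)` is quasiconcave: it vanishes exactly at `0`, is nondecreasing,
and `t ↦ φ(t)/t` is nonincreasing on `(0, R)`.  (Values on `(0, R)` are finite.) -/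
def QuasiConcaveOn (R : ℝ≥0∞) (φ : ℝ → ℝ≥0∞) : Prop :=
  φ 0 = 0 ∧
  (∀ t ∈ DomIoo R, 0 < φ t ∧ φ t < ⊤) ∧
  (∀ s t : ℝ, 0 ≤ s → s ≤ t → t ∈ DomIoo R → φ s ≤ φ t) ∧
  (∀ s t : ℝ, s ∈ DomIoo R → s ≤ t → t ∈ DomIoo R →
    φ t / ENNReal.ofReal t ≤ φ s / ENNReal.ofReal s)

/-- `f` is a nonnegative nonincreasing measurable function on `(0, R)`
(nonnegativity is built into the codomain `[0, ∞]`). -/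
def NonincOn (R : ℝ≥0∞) (f : ℝ → ℝ≥0∞) : Prop :=
  Measurable f ∧ ∀ s t : ℝ, s ∈ DomIoo R → s ≤ t → t ∈ DomIoo R → f t ≤ f s

/-- The level function `f**(t) = (1/t) ∫₀ᵗ f(s) ds`. -/
def dstar (f : ℝ → ℝ≥0∞) (t : ℝ) : ℝ≥0∞ :=
  (∫⁻ s in Ioo (0 : ℝ) t, f s) / ENNReal.ofReal t

/-- The supremum operator `S_φ f(t) = (1/φ(t)) ⋅ sup_{0<s<t} φ(s) f(s)`. -/
def Ssup (φ f : ℝ → ℝ≥0∞) (t : ℝ) : ℝ≥0∞ :=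
  (⨆ s ∈ Ioo (0 : ℝ) t, φ s * f s) / φ t

/-- The supremum operator `T_ψ f(t) = (1/ψ(t)) ⋅ sup_{t<s<R} ψ(s) f(s)`. -/
def Tsup (R : ℝ≥0∞) (ψ f : ℝ → ℝ≥0∞) (t : ℝ) : ℝ≥0∞ :=
  (⨆ s ∈ DomAbove R t, ψ s * f s) / ψ t

/-- The `B`-condition: `∫₀ᵗ ds/φ(s) ≤ C ⋅ t/φ(t)` on `(0, R)` for some constant `C > 0`. -/
def BCond (R : ℝ≥0∞) (φ : ℝ → ℝ≥0∞) : Prop :=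
  ∃ C : ℝ, 0 < C ∧ ∀ t ∈ DomIoo R,
    (∫⁻ s in Ioo (0 : ℝ) t, 1 / φ s) ≤ ENNReal.ofReal C * (ENNReal.ofReal t / φ t)

/-- A weight on `(0, R)`: positive, measurable and locally integrable
(with finite integral near the origin). -/
def IsWeight (R : ℝ≥0∞) (w : ℝ → ℝ≥0∞) : Prop :=
  Measurable w ∧ (∀ t ∈ DomIoo R, 0 < w t ∧ w t < ⊤) ∧
  ∀ t ∈ DomIoo R, (∫⁻ s in Ioo (0 : ℝ) t, w s) < ⊤

/-- Nontriviality of a weight `w` for the exponent `p`: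
`∫₁^∞ s^{-p} w(s) ds < ∞` when `R = ∞`, and `∫₀ᴿ s^{-p} w(s) ds = ∞` when `R < ∞`. -/
def Nontriv (R : ℝ≥0∞) (p : ℝ) (w : ℝ → ℝ≥0∞) : Prop :=
  (R = ⊤ → (∫⁻ s in Ioi (1 : ℝ), ENNReal.ofReal s ^ (-p) * w s) < ⊤) ∧
  (R ≠ ⊤ → (∫⁻ s in DomIoo R, ENNReal.ofReal s ^ (-p) * w s) = ⊤)

/-!
Lower bound: `f ≤ f**` for nonincreasing `f`, and for `s > t` monotonicity of `ψ` gives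
`ψ(s) f**(s) ≥ ψ(t) (∫₀ᵗ f) / s`; letting `s ↓ t` yields `ψ(t) f**(t) ≤ ψ(t) T_ψ(f**)(t)`.

Sufficiency of the B-condition: for `s > t` split `∫₀ˢ f = ∫₀ᵗ f + ∫ₜˢ f`. As `ψ(s)/s ≤ ψ(t)/t`, the
first part contributes at most `ψ(t) f**(t)`. On `(t, s)` we have `f ≤ ψ(t) T_ψ f(t) / ψ`, and the
B-condition gives `∫ₜˢ 1/ψ ≤ C s/ψ(s)`, so the second part contributes at most `C ψ(t) T_ψ f(t)`.

Necessity: for `0 < ε < w` test the upper estimate at `t = ε` with `f = 1/ψ(clamp(·, ε, w))` on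
`(-∞, w)` and `f = 0` beyond. Then `ψ(s) f(s) ≤ 1` for `s > ε` and `f ≤ 1/ψ(ε)`, so
`ψ(ε) (T_ψ f(ε) + f**(ε)) ≤ 2` and `ψ(w) f**(w) ≤ ψ(ε) T_ψ(f**)(ε) ≤ 2C`, i.e.
`∫_ε^w 1/ψ ≤ 2C w/ψ(w)`. Let `ε → 0`.
-/

open Topology

theorem div_ofReal_le_of_eventually_le {X L : ℝ≥0∞} {t : ℝ}
    (h : ∀ᶠ s in 𝓝[>] t, X / ENNReal.ofReal s ≤ L) : X / ENNReal.ofReal t ≤ L := by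
  have hlim : Tendsto (fun s => X * (ENNReal.ofReal s)⁻¹) (𝓝[>] t)
      (𝓝 (X * (ENNReal.ofReal t)⁻¹)) := by
    refine ENNReal.Tendsto.const_mul ?_ (Or.inl (ENNReal.inv_ne_zero.2 ofReal_ne_top))
    exact tendsto_inv_iff.2 (continuous_ofReal.continuousAt.mono_left nhdsWithin_le_nhds)
  exact le_of_tendsto hlim h

theorem setLIntegral_Ioo_le_of_forall_lt {g : ℝ → ℝ≥0∞} {a b : ℝ} {K : ℝ≥0∞}
    (h : ∀ ε, a < ε → ε < b → ∫⁻ x in Ioo ε b, g x ≤ K) : ∫⁻ x in Ioo a b, g x ≤ K := by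
  have hunion : Ioo a b = ⋃ n : ℕ, Ioo (a + 1 / (n + 1)) b := by
    ext x
    simp only [mem_Ioo, mem_iUnion]
    refine ⟨fun ⟨hax, hxb⟩ => ?_, fun ⟨n, hnx, hxb⟩ => ⟨?_, hxb⟩⟩
    · obtain ⟨n, hn⟩ := exists_nat_one_div_lt (sub_pos.2 hax)
      exact ⟨n, by linarith, hxb⟩
    · have : (0 : ℝ) < 1 / (n + 1) := by positivity
      linarith
  have hmono : Monotone fun n : ℕ => Ioo (a + 1 / (n + 1)) b := fun m n hmn =>
    Ioo_subset_Ioo_left (by gcongr)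
  rw [hunion, setLIntegral_iUnion_of_directed _ hmono.directed_le]
  refine iSup_le fun n => ?_
  rcases lt_or_ge (a + 1 / (n + 1)) b with hlt | hge
  · exact h _ (lt_add_of_pos_right a (by positivity)) hlt
  · rw [Ioo_eq_empty hge.not_gt, Measure.restrict_empty, lintegral_zero_measure]
    exact zero_le

section Domain

variable {R : ℝ≥0∞} {s t : ℝ}

theorem mem_domIoo_of_le (hs : 0 < s) (hst : s ≤ t) (ht : t ∈ DomIoo R) : s ∈ DomIoo R :=
  ⟨hs, (ENNReal.ofReal_le_ofReal hst).trans_lt ht.2⟩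

theorem domAbove_subset_domIoo (ht : 0 ≤ t) : DomAbove R t ⊆ DomIoo R :=
  fun _ hs => ⟨ht.trans_lt hs.1, hs.2⟩

theorem domAbove_mem_nhdsGT (ht : t ∈ DomIoo R) : DomAbove R t ∈ 𝓝[>] t := by
  have hopen : IsOpen {s : ℝ | ENNReal.ofReal s < R} := isOpen_lt continuous_ofReal continuous_const
  exact inter_mem self_mem_nhdsWithin (nhdsWithin_le_nhds (hopen.mem_nhds ht.2))

end Domain

namespace QuasiConcaveOn

variable {R : ℝ≥0∞} {ψ : ℝ → ℝ≥0∞} {s t : ℝ}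

theorem ne_zero (hψ : QuasiConcaveOn R ψ) (ht : t ∈ DomIoo R) : ψ t ≠ 0 :=
  (hψ.2.1 t ht).1.ne'

theorem ne_top (hψ : QuasiConcaveOn R ψ) (ht : t ∈ DomIoo R) : ψ t ≠ ⊤ :=
  (hψ.2.1 t ht).2.ne

theorem mono (hψ : QuasiConcaveOn R ψ) (hs : 0 ≤ s) (hst : s ≤ t) (ht : t ∈ DomIoo R) :
    ψ s ≤ ψ t :=
  hψ.2.2.1 s t hs hst ht

theorem div_ofReal_le_div_ofReal (hψ : QuasiConcaveOn R ψ) (hs : s ∈ DomIoo R) (hst : s ≤ t)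
    (ht : t ∈ DomIoo R) : ψ t / ENNReal.ofReal t ≤ ψ s / ENNReal.ofReal s :=
  hψ.2.2.2 s t hs hst ht

end QuasiConcaveOn

section Operators

variable {R : ℝ≥0∞} {ψ f : ℝ → ℝ≥0∞} {t : ℝ}

theorem mul_Tsup (h0 : ψ t ≠ 0) (htop : ψ t ≠ ⊤) :
    ψ t * Tsup R ψ f t = ⨆ s ∈ DomAbove R t, ψ s * f s :=
  ENNReal.mul_div_cancel h0 htop

theorem Tsup_mono {g : ℝ → ℝ≥0∞} (hfg : ∀ s ∈ DomAbove R t, f s ≤ g s) :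
    Tsup R ψ f t ≤ Tsup R ψ g t :=
  ENNReal.div_le_div_right (iSup₂_mono fun s hs => mul_le_mul_right (hfg s hs) _) _

theorem mul_dstar (c : ℝ≥0∞) :
    c * dstar f t = c / ENNReal.ofReal t * ∫⁻ s in Ioo (0 : ℝ) t, f s := by
  rw [dstar, div_eq_mul_inv, div_eq_mul_inv]
  ring

theorem dstar_le_of_forall_le {M : ℝ≥0∞} (hfM : ∀ s, f s ≤ M) : dstar f t ≤ M := by
  refine ENNReal.div_le_of_le_mul ?_
  calc ∫⁻ s in Ioo (0 : ℝ) t, f s ≤ ∫⁻ _ in Ioo (0 : ℝ) t, M := lintegral_mono hfM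
    _ = M * ENNReal.ofReal t := by rw [setLIntegral_const, Real.volume_Ioo, sub_zero]

theorem NonincOn.le_dstar (hf : NonincOn R f) (ht : t ∈ DomIoo R) : f t ≤ dstar f t := by
  rw [dstar, ENNReal.le_div_iff_mul_le (Or.inl (by simpa using ht.1)) (Or.inl ofReal_ne_top)]
  calc f t * ENNReal.ofReal t = ∫⁻ _ in Ioo (0 : ℝ) t, f t := by
        rw [setLIntegral_const, Real.volume_Ioo, sub_zero]
    _ ≤ ∫⁻ s in Ioo (0 : ℝ) t, f s :=
        setLIntegral_mono' measurableSet_Ioo fun s hs =>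
          hf.2 s t (mem_domIoo_of_le hs.1 hs.2.le ht) hs.2.le ht

end Operators

section LowerBound

variable {R : ℝ≥0∞} {ψ f : ℝ → ℝ≥0∞} {t : ℝ}

theorem dstar_le_Tsup_dstar (hψ : QuasiConcaveOn R ψ) (ht : t ∈ DomIoo R) :
    dstar f t ≤ Tsup R ψ (dstar f) t := by
  rw [← ENNReal.mul_le_mul_iff_right (hψ.ne_zero ht) (hψ.ne_top ht),
    mul_Tsup (hψ.ne_zero ht) (hψ.ne_top ht), dstar, ← mul_div_assoc]
  refine div_ofReal_le_of_eventually_le ?_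
  filter_upwards [domAbove_mem_nhdsGT ht] with s hs
  calc ψ t * (∫⁻ u in Ioo (0 : ℝ) t, f u) / ENNReal.ofReal s
      ≤ ψ s * ((∫⁻ u in Ioo (0 : ℝ) s, f u) / ENNReal.ofReal s) := by
        rw [mul_div_assoc]
        gcongr
        · exact hψ.mono ht.1.le hs.1.le (domAbove_subset_domIoo ht.1.le hs)
        · exact hs.1.le
    _ ≤ ⨆ s ∈ DomAbove R t, ψ s * dstar f s := le_iSup₂_of_le s hs le_rfl

theorem add_dstar_le_two_mul_Tsup_dstar (hψ : QuasiConcaveOn R ψ) (hf : NonincOn R f)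
    (ht : t ∈ DomIoo R) : Tsup R ψ f t + dstar f t ≤ 2 * Tsup R ψ (dstar f) t := by
  have hT : Tsup R ψ f t ≤ Tsup R ψ (dstar f) t :=
    Tsup_mono fun s hs => hf.le_dstar (domAbove_subset_domIoo ht.1.le hs)
  rw [two_mul]
  exact add_le_add hT (dstar_le_Tsup_dstar hψ ht)

end LowerBound

section UpperBound

variable {R : ℝ≥0∞} {ψ f : ℝ → ℝ≥0∞} {s t C : ℝ}

theorem setLIntegral_Ioo_le_mul_setLIntegral_inv (hψ : QuasiConcaveOn R ψ) (ht : 0 ≤ t)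
    (hs : ENNReal.ofReal s < R) :
    ∫⁻ u in Ioo t s, f u ≤
      (⨆ u ∈ DomAbove R t, ψ u * f u) * ∫⁻ u in Ioo t s, 1 / ψ u := by
  have hdom : ∀ u ∈ Ioo t s, u ∈ DomAbove R t := fun u hu =>
    ⟨hu.1, (ENNReal.ofReal_le_ofReal hu.2.le).trans_lt hs⟩
  have hanti : AntitoneOn (fun u => 1 / ψ u) (Ioo t s) := fun u hu v hv huv =>
    ENNReal.div_le_div_left (hψ.mono (ht.trans hu.1.le) huv
      (domAbove_subset_domIoo ht (hdom v hv))) 1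
  rw [← lintegral_const_mul'' _ (aemeasurable_restrict_of_antitoneOn measurableSet_Ioo hanti)]
  refine setLIntegral_mono' measurableSet_Ioo fun u hu => ?_
  have huD := domAbove_subset_domIoo ht (hdom u hu)
  rw [← mul_div_assoc, mul_one,
    ENNReal.le_div_iff_mul_le (Or.inl (hψ.ne_zero huD)) (Or.inl (hψ.ne_top huD)), mul_comm]
  exact le_iSup₂_of_le u (hdom u hu) le_rfl

theorem mul_dstar_le_of_bCond (hψ : QuasiConcaveOn R ψ)
    (hB : ∀ t ∈ DomIoo R,
      (∫⁻ s in Ioo (0 : ℝ) t, 1 / ψ s) ≤ ENNReal.ofReal C * (ENNReal.ofReal t / ψ t))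
    (ht : t ∈ DomIoo R) (hs : s ∈ DomAbove R t) :
    ψ s * dstar f s ≤
      ψ t * dstar f t + ENNReal.ofReal C * ⨆ u ∈ DomAbove R t, ψ u * f u := by
  have hsD := domAbove_subset_domIoo ht.1.le hs
  set S := ⨆ u ∈ DomAbove R t, ψ u * f u
  have hsplit : ∫⁻ u in Ioo (0 : ℝ) s, f u ≤
      (∫⁻ u in Ioo (0 : ℝ) t, f u) + ∫⁻ u in Ioo t s, f u := by
    rw [← Ioo_union_Ico_eq_Ioo ht.1 hs.1.le, setLIntegral_congr (Ioo_ae_eq_Ico (a := t) (b := s))]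
    exact lintegral_union_le _ _ _
  have htail : ψ s / ENNReal.ofReal s * ∫⁻ u in Ioo t s, f u ≤ ENNReal.ofReal C * S := by
    calc ψ s / ENNReal.ofReal s * ∫⁻ u in Ioo t s, f u
        ≤ ψ s / ENNReal.ofReal s * (S * (ENNReal.ofReal C * (ENNReal.ofReal s / ψ s))) := by
          gcongr
          refine (setLIntegral_Ioo_le_mul_setLIntegral_inv hψ ht.1.le hs.2).trans ?_
          gcongr
          exact (lintegral_mono_set (Ioo_subset_Ioo_left ht.1.le)).trans (hB s hsD)
      _ = ENNReal.ofReal C * S * ((ψ s / ψ s) * (ENNReal.ofReal s / ENNReal.ofReal s)) := by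
          simp only [div_eq_mul_inv]
          ring
      _ = ENNReal.ofReal C * S := by
          rw [ENNReal.div_self (hψ.ne_zero hsD) (hψ.ne_top hsD),
            ENNReal.div_self (by simpa using hsD.1) ofReal_ne_top, mul_one, mul_one]
  calc ψ s * dstar f s
      ≤ ψ s / ENNReal.ofReal s * (∫⁻ u in Ioo (0 : ℝ) t, f u)
        + ψ s / ENNReal.ofReal s * ∫⁻ u in Ioo t s, f u := by
        rw [mul_dstar, ← mul_add]
        gcongr
    _ ≤ ψ t * dstar f t + ENNReal.ofReal C * S := by
        rw [mul_dstar]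
        exact add_le_add (mul_le_mul_left (hψ.div_ofReal_le_div_ofReal ht hs.1.le hsD) _) htail

theorem Tsup_dstar_le_of_bCond (hψ : QuasiConcaveOn R ψ)
    (hB : ∀ t ∈ DomIoo R,
      (∫⁻ s in Ioo (0 : ℝ) t, 1 / ψ s) ≤ ENNReal.ofReal C * (ENNReal.ofReal t / ψ t))
    (ht : t ∈ DomIoo R) :
    Tsup R ψ (dstar f) t ≤ dstar f t + ENNReal.ofReal C * Tsup R ψ f t := by
  have h0 := hψ.ne_zero ht
  have htop := hψ.ne_top ht
  rw [← ENNReal.mul_le_mul_iff_right h0 htop, mul_Tsup h0 htop, mul_add, mul_left_comm,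
    mul_Tsup h0 htop]
  exact iSup₂_le fun s hs => mul_dstar_le_of_bCond hψ hB ht hs

end UpperBound

section Necessity

variable {R : ℝ≥0∞} {ψ : ℝ → ℝ≥0∞} {ε w u C : ℝ}

def truncInv (ψ : ℝ → ℝ≥0∞) (ε w : ℝ) : ℝ → ℝ≥0∞ :=
  (Iio w).indicator fun u => (ψ (max ε (min u w)))⁻¹

theorem truncInv_of_mem_Ioo (hu : u ∈ Ioo ε w) : truncInv ψ ε w u = (ψ u)⁻¹ := by
  rw [truncInv, indicator_of_mem (mem_Iio.2 hu.2), min_eq_left hu.2.le, max_eq_right hu.1.le]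

theorem mul_truncInv_le_one (hu : ε < u) : ψ u * truncInv ψ ε w u ≤ 1 := by
  rcases lt_or_ge u w with huw | hwu
  · rw [truncInv_of_mem_Ioo ⟨hu, huw⟩]
    exact ENNReal.mul_inv_le_one _
  · rw [truncInv, indicator_of_notMem (notMem_Iio.2 hwu), mul_zero]
    exact zero_le_one

theorem clamp_mem_domIoo (hε : 0 < ε) (hεw : ε ≤ w) (hw : w ∈ DomIoo R) :
    max ε (min u w) ∈ DomIoo R :=
  mem_domIoo_of_le (hε.trans_le (le_max_left _ _)) (max_le hεw (min_le_right _ _)) hw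

theorem truncInv_le (hψ : QuasiConcaveOn R ψ) (hε : 0 < ε) (hεw : ε ≤ w) (hw : w ∈ DomIoo R) :
    truncInv ψ ε w u ≤ (ψ ε)⁻¹ :=
  (indicator_le_self' (fun _ _ => zero_le) u).trans <|
    ENNReal.inv_le_inv.2 (hψ.mono hε.le (le_max_left _ _) (clamp_mem_domIoo hε hεw hw))

theorem nonincOn_truncInv (hψ : QuasiConcaveOn R ψ) (hε : 0 < ε) (hεw : ε ≤ w)
    (hw : w ∈ DomIoo R) : NonincOn R (truncInv ψ ε w) := by
  have hmono : Monotone fun u => ψ (max ε (min u w)) := fun x y hxy =>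
    hψ.mono (hε.le.trans (le_max_left _ _)) (by gcongr) (clamp_mem_domIoo hε hεw hw)
  refine ⟨hmono.measurable.inv.indicator measurableSet_Iio, fun x y _ hxy _ => ?_⟩
  rcases lt_or_ge y w with hyw | hwy
  · rw [truncInv, indicator_of_mem (mem_Iio.2 hyw),
      indicator_of_mem (mem_Iio.2 (hxy.trans_lt hyw))]
    exact ENNReal.inv_le_inv.2 (hmono hxy)
  · rw [truncInv, indicator_of_notMem (notMem_Iio.2 hwy)]
    exact zero_le

theorem setLIntegral_Ioo_inv_le_of_Tsup_dstar_le (hψ : QuasiConcaveOn R ψ)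
    (h : ∀ f : ℝ → ℝ≥0∞, NonincOn R f → ∀ t ∈ DomIoo R,
      Tsup R ψ (dstar f) t ≤ ENNReal.ofReal C * (Tsup R ψ f t + dstar f t))
    (hε : 0 < ε) (hεw : ε < w) (hw : w ∈ DomIoo R) :
    ∫⁻ u in Ioo ε w, 1 / ψ u ≤ ENNReal.ofReal (2 * C) * (ENNReal.ofReal w / ψ w) := by
  set f := truncInv ψ ε w
  have hεD : ε ∈ DomIoo R := mem_domIoo_of_le hε hεw.le hw
  have h0 := hψ.ne_zero hεD
  have htop := hψ.ne_top hεD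
  have hTf : ψ ε * Tsup R ψ f ε ≤ 1 := by
    rw [mul_Tsup h0 htop]
    exact iSup₂_le fun u hu => mul_truncInv_le_one hu.1
  have hdf : ψ ε * dstar f ε ≤ 1 :=
    (mul_le_mul_right (dstar_le_of_forall_le fun _ => truncInv_le hψ hε hεw.le hw) _).trans
      (ENNReal.mul_inv_le_one _)
  have hw_bound : ψ w * dstar f w ≤ 2 * ENNReal.ofReal C :=
    calc ψ w * dstar f w ≤ ψ ε * Tsup R ψ (dstar f) ε := by
          rw [mul_Tsup h0 htop]
          exact le_iSup₂_of_le w ⟨hεw, hw.2⟩ le_rfl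
      _ ≤ ψ ε * (ENNReal.ofReal C * (Tsup R ψ f ε + dstar f ε)) :=
          mul_le_mul_right (h f (nonincOn_truncInv hψ hε hεw.le hw) ε hεD) _
      _ = ENNReal.ofReal C * (ψ ε * Tsup R ψ f ε + ψ ε * dstar f ε) := by ring
      _ ≤ ENNReal.ofReal C * 2 := by
          gcongr
          calc _ ≤ (1 : ℝ≥0∞) + 1 := add_le_add hTf hdf
            _ = 2 := one_add_one_eq_two
      _ = 2 * ENNReal.ofReal C := mul_comm _ _
  calc ∫⁻ u in Ioo ε w, 1 / ψ u = ∫⁻ u in Ioo ε w, f u :=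
        setLIntegral_congr_fun measurableSet_Ioo fun u hu =>
          (one_div _).trans (truncInv_of_mem_Ioo hu).symm
    _ ≤ ∫⁻ u in Ioo 0 w, f u := lintegral_mono_set (Ioo_subset_Ioo_left hε.le)
    _ = ENNReal.ofReal w * dstar f w :=
        (ENNReal.mul_div_cancel (by simpa using hw.1) ofReal_ne_top).symm
    _ ≤ ENNReal.ofReal w * (2 * ENNReal.ofReal C / ψ w) := by
        gcongr
        rwa [ENNReal.le_div_iff_mul_le (Or.inl (hψ.ne_zero hw)) (Or.inl (hψ.ne_top hw)),
          mul_comm]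
    _ = ENNReal.ofReal (2 * C) * (ENNReal.ofReal w / ψ w) := by
        rw [ENNReal.ofReal_mul zero_le_two, ENNReal.ofReal_ofNat]
        simp only [div_eq_mul_inv]
        ring

theorem bCond_of_Tsup_dstar_le (hψ : QuasiConcaveOn R ψ) (hC : 0 < C)
    (h : ∀ f : ℝ → ℝ≥0∞, NonincOn R f → ∀ t ∈ DomIoo R,
      Tsup R ψ (dstar f) t ≤ ENNReal.ofReal C * (Tsup R ψ f t + dstar f t)) :
    BCond R ψ :=
  ⟨2 * C, by positivity, fun _ hw => setLIntegral_Ioo_le_of_forall_lt fun _ hε hεw =>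
    setLIntegral_Ioo_inv_le_of_Tsup_dstar_le hψ h hε hεw hw⟩

end Necessity

theorem statement8_general (R : ℝ≥0∞) (ψ : ℝ → ℝ≥0∞)
    (hψ : QuasiConcaveOn R ψ) :
    ((∃ C : ℝ, 0 < C ∧ ∀ f : ℝ → ℝ≥0∞, NonincOn R f → ∀ t ∈ DomIoo R,
        (ENNReal.ofReal C)⁻¹ * (Tsup R ψ f t + dstar f t) ≤ Tsup R ψ (dstar f) t ∧
        Tsup R ψ (dstar f) t ≤ ENNReal.ofReal C * (Tsup R ψ f t + dstar f t)) ↔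
      BCond R ψ) ∧
    (∀ f : ℝ → ℝ≥0∞, NonincOn R f → ∀ t ∈ DomIoo R,
      Tsup R ψ f t + dstar f t ≤ 2 * Tsup R ψ (dstar f) t) := by
  have lower := fun f (hf : NonincOn R f) t (ht : t ∈ DomIoo R) =>
    add_dstar_le_two_mul_Tsup_dstar hψ hf ht
  refine ⟨⟨fun ⟨C, hC, h⟩ => bCond_of_Tsup_dstar_le hψ hC fun f hf t ht => (h f hf t ht).2,
    fun ⟨C, hC, hB⟩ => ⟨C + 2, by linarith, fun f hf t ht => ⟨?_, ?_⟩⟩⟩, lower⟩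
  · have hC' : (2 : ℝ≥0∞) ≤ ENNReal.ofReal (C + 2) := by
      rw [← ENNReal.ofReal_ofNat 2]
      exact ENNReal.ofReal_le_ofReal (by linarith)
    rw [ENNReal.inv_mul_le_iff (ENNReal.ofReal_pos.2 (by linarith)).ne' ofReal_ne_top]
    exact (lower f hf t ht).trans (mul_le_mul_left hC' _)
  · calc Tsup R ψ (dstar f) t ≤ dstar f t + ENNReal.ofReal C * Tsup R ψ f t :=
          Tsup_dstar_le_of_bCond hψ hB ht
      _ ≤ ENNReal.ofReal (C + 2) * dstar f t + ENNReal.ofReal (C + 2) * Tsup R ψ f t := by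
          gcongr
          · exact le_mul_of_one_le_left' (ENNReal.one_le_ofReal.2 (by linarith))
          · linarith
      _ = ENNReal.ofReal (C + 2) * (Tsup R ψ f t + dstar f t) := by ring

/-- `T_ψ(f**) ≃ T_ψ f + f**` holds for all nonneg. nonincreasing `f` iff `ψ ∈ B`;
the lower bound `T_ψ f + f** ≤ 2 ⋅ T_ψ(f**)` holds for every quasiconcave `ψ`. -/
theorem statement8 (R : ℝ≥0∞) (hR : 0 < R) (ψ : ℝ → ℝ≥0∞)
    (hψ : QuasiConcaveOn R ψ) :
    ((∃ C : ℝ, 0 < C ∧ ∀ f : ℝ → ℝ≥0∞, NonincOn R f → ∀ t ∈ DomIoo R,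
        (ENNReal.ofReal C)⁻¹ * (Tsup R ψ f t + dstar f t) ≤ Tsup R ψ (dstar f) t ∧
        Tsup R ψ (dstar f) t ≤ ENNReal.ofReal C * (Tsup R ψ f t + dstar f t)) ↔
      BCond R ψ) ∧
    (∀ f : ℝ → ℝ≥0∞, NonincOn R f → ∀ t ∈ DomIoo R,
      Tsup R ψ f t + dstar f t ≤ 2 * Tsup R ψ (dstar f) t) :=
  statement8_general R ψ hψ
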